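/- arXiv:1706.09299 — 2 statements merged into one kernel-verified Lean document; each statement's English description precedes it below -/
import Mathlib

section
/- (Zarantonello) Let X be a (complete) real Hilbert space and let F : X → X be L-Lipschitz (L > 0) and strongly monotone with constant c > 0. Then there exists a unique u ∈ X with F(u) = 0. Moreover, for any initial value u⁰ ∈ X, the fixed point iteration u^{n+1} = B(u^n), where B(x) = x − (c/L²)·F(x), converges to u. -/
open scoped RealInnerProductSpace

/-!
The gradient-type step `B x = x - t • F x` satisfies
`‖B x - B y‖² ≤ (1 - 2 t c + t² L²) ‖x - y‖²`; the step size `t = c / L²` minimises the factor,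
making `B` a contraction with constant `√(1 - c² / L²) < 1`. Banach's fixed point theorem then
gives a unique fixed point of `B`, i.e. a unique zero of `F`, as the limit of the iterates.
-/

section

variable {X : Type*} [NormedAddCommGroup X] [InnerProductSpace ℝ X]

theorem norm_sub_smul_sq_le {a b : X} {t c L : ℝ} (ht : 0 ≤ t) (hb : ‖b‖ ≤ L * ‖a‖)
    (hab : c * ‖a‖ ^ 2 ≤ ⟪b, a⟫) :
    ‖a - t • b‖ ^ 2 ≤ (1 - 2 * t * c + t ^ 2 * L ^ 2) * ‖a‖ ^ 2 := by
  have hb_sq : ‖b‖ ^ 2 ≤ L ^ 2 * ‖a‖ ^ 2 := by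
    rw [← mul_pow]; exact pow_le_pow_left₀ (norm_nonneg b) hb 2
  rw [norm_sub_sq_real, real_inner_smul_right, norm_smul, mul_pow, Real.norm_of_nonneg ht,
    real_inner_comm]
  nlinarith [mul_le_mul_of_nonneg_left hab ht, mul_le_mul_of_nonneg_left hb_sq (sq_nonneg t)]

/-- If `1 - 2 t c + t² L² < 0`, then `X` is trivial, so the junk value `√_ = 0` is still a
valid constant. -/
theorem norm_sub_smul_sub_le {F : X → X} {t c L : ℝ} (ht : 0 ≤ t)
    (hLip : ∀ x y : X, ‖F x - F y‖ ≤ L * ‖x - y‖)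
    (hmono : ∀ x y : X, c * ‖x - y‖ ^ 2 ≤ ⟪F x - F y, x - y⟫) (x y : X) :
    ‖(x - t • F x) - (y - t • F y)‖ ≤ √(1 - 2 * t * c + t ^ 2 * L ^ 2) * ‖x - y‖ := by
  have hsq := norm_sub_smul_sq_le ht (hLip x y) (hmono x y)
  rw [sub_sub_sub_comm, ← smul_sub]
  calc ‖(x - y) - t • (F x - F y)‖ = √(‖(x - y) - t • (F x - F y)‖ ^ 2) :=
        (Real.sqrt_sq (norm_nonneg _)).symm
    _ ≤ √((1 - 2 * t * c + t ^ 2 * L ^ 2) * ‖x - y‖ ^ 2) := Real.sqrt_le_sqrt hsq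
    _ = √(1 - 2 * t * c + t ^ 2 * L ^ 2) * ‖x - y‖ := by
        rw [Real.sqrt_mul' _ (sq_nonneg _), Real.sqrt_sq (norm_nonneg _)]

theorem contractingWith_sub_smul {F : X → X} {c L : ℝ} (hL : 0 < L) (hc : 0 < c)
    (hLip : ∀ x y : X, ‖F x - F y‖ ≤ L * ‖x - y‖)
    (hmono : ∀ x y : X, c * ‖x - y‖ ^ 2 ≤ ⟪F x - F y, x - y⟫) :
    ContractingWith (√(1 - c ^ 2 / L ^ 2)).toNNReal (fun x => x - (c / L ^ 2) • F x) := by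
  have hfactor : 1 - 2 * (c / L ^ 2) * c + (c / L ^ 2) ^ 2 * L ^ 2 = 1 - c ^ 2 / L ^ 2 := by
    field_simp; ring
  refine ⟨?_, LipschitzWith.of_dist_le' fun x y => ?_⟩
  · rw [Real.toNNReal_lt_one, Real.sqrt_lt' one_pos]
    have : 0 < c ^ 2 / L ^ 2 := by positivity
    linarith
  · rw [dist_eq_norm, dist_eq_norm, ← hfactor]
    exact norm_sub_smul_sub_le (by positivity) hLip hmono x y

theorem isFixedPt_sub_smul_iff {F : X → X} {t : ℝ} (ht : t ≠ 0) {x : X} :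
    Function.IsFixedPt (fun x => x - t • F x) x ↔ F x = 0 := by
  simp [Function.IsFixedPt, ht]

end

/-- (Zarantonello) An `L`-Lipschitz, `c`-strongly monotone operator `F` on a complete real
Hilbert space has a unique zero `u`, and for any initial value the fixed point iteration
`u^{n+1} = B(u^n)` with `B x = x - (c/L²) • F x` converges to `u`. -/
theorem stmt2
    {X : Type*} [NormedAddCommGroup X] [InnerProductSpace ℝ X] [CompleteSpace X]
    (F : X → X) (L c : ℝ) (hL : 0 < L) (hc : 0 < c)
    (hLip : ∀ x y : X, ‖F x - F y‖ ≤ L * ‖x - y‖)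
    (hmono : ∀ x y : X, c * ‖x - y‖ ^ 2 ≤ ⟪F x - F y, x - y⟫) :
    ∃ u : X, F u = 0 ∧ (∀ v : X, F v = 0 → v = u) ∧
      ∀ u0 : X,
        Filter.Tendsto (fun n => (fun x => x - (c / L ^ 2) • F x)^[n] u0)
          Filter.atTop (nhds u) := by
  have hB := contractingWith_sub_smul hL hc hLip hmono
  have ht : c / L ^ 2 ≠ 0 := by positivity
  refine ⟨hB.fixedPoint _, (isFixedPt_sub_smul_iff ht).mp hB.fixedPoint_isFixedPt,
    fun v hv => hB.fixedPoint_unique ((isFixedPt_sub_smul_iff ht).mpr hv),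
    hB.tendsto_iterate_fixedPoint⟩
end

section
/- Let X be a (complete) real Hilbert space, let F : X → X be L-Lipschitz (L > 0) and strongly monotone with constant c > 0, set B(x) = x − (c/L²)·F(x) and α = √(1 − c²/L²), and assume α ∈ (0,1). Let u ∈ X be the unique zero of F. Let η_h ≥ 0 and let (u^n) and (u_h^n) be sequences in X with u_h^0 = u^0, u^{n+1} = B(u^n) for all n, and |⟪B(u_h^n) − u_h^{n+1}, v⟫| ≤ η_h‖v‖ for all v ∈ X and all n. Then for all n ∈ ℕ the a priori error estimate ‖u − u_h^n‖ ≤ (1/(1 − α))·(αⁿ·‖u¹ − u⁰‖ + η_h) holds. -/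
open scoped RealInnerProductSpace NNReal

/-!
The relaxed map `B x = x - (c/L²) F x` is a contraction with constant `α`, since expanding the
square gives `‖B x - B y‖² ≤ (1 - 2τc + τ²L²) ‖x - y‖²` with `τ = c/L²`. Testing the fineness
assumption with `v = B (u_hⁿ) - u_hⁿ⁺¹` shows that each discrete step lands within `η_h` of the
exact step, so the errors `eₙ = ‖u - u_hⁿ‖` satisfy `eₙ₊₁ ≤ α eₙ + η_h`, while the classical
a priori bound for contractions gives `e₀ ≤ ‖u¹ - u⁰‖ / (1 - α)`.
-/

section StronglyMonotone

variable {X : Type*} [NormedAddCommGroup X] [InnerProductSpace ℝ X]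

theorem norm_le_of_forall_abs_inner_le {w : X} {η : ℝ} (hη : 0 ≤ η)
    (h : ∀ v : X, |⟪w, v⟫| ≤ η * ‖v‖) : ‖w‖ ≤ η := by
  rcases (norm_nonneg w).eq_or_lt with hw | hw
  · exact hw ▸ hη
  · have hww := h w
    rw [real_inner_self_eq_norm_sq, abs_of_nonneg (by positivity)] at hww
    nlinarith

theorem norm_sub_smul_sub_sq_le {F : X → X} {L c τ : ℝ} (hτ : 0 ≤ τ)
    (hLip : ∀ x y : X, ‖F x - F y‖ ≤ L * ‖x - y‖)
    (hmono : ∀ x y : X, c * ‖x - y‖ ^ 2 ≤ ⟪F x - F y, x - y⟫) (x y : X) :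
    ‖(x - τ • F x) - (y - τ • F y)‖ ^ 2 ≤ (1 - 2 * τ * c + τ ^ 2 * L ^ 2) * ‖x - y‖ ^ 2 := by
  have hexpand : ‖(x - τ • F x) - (y - τ • F y)‖ ^ 2
      = ‖x - y‖ ^ 2 - 2 * τ * ⟪F x - F y, x - y⟫ + τ ^ 2 * ‖F x - F y‖ ^ 2 := by
    rw [show (x - τ • F x) - (y - τ • F y) = (x - y) - τ • (F x - F y) by
      rw [smul_sub]; abel, norm_sub_sq_real, real_inner_smul_right, norm_smul, real_inner_comm,
      Real.norm_eq_abs, mul_pow, sq_abs]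
    ring
  have hsq : ‖F x - F y‖ ^ 2 ≤ (L * ‖x - y‖) ^ 2 := pow_le_pow_left₀ (norm_nonneg _) (hLip x y) 2
  rw [hexpand]
  nlinarith [mul_le_mul_of_nonneg_left (hmono x y) hτ,
    mul_le_mul_of_nonneg_left hsq (sq_nonneg τ)]

theorem norm_sub_smul_sub_le_sqrt_mul {F : X → X} {L c : ℝ} (hc : 0 ≤ c)
    (hLip : ∀ x y : X, ‖F x - F y‖ ≤ L * ‖x - y‖)
    (hmono : ∀ x y : X, c * ‖x - y‖ ^ 2 ≤ ⟪F x - F y, x - y⟫) (x y : X) :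
    ‖(x - (c / L ^ 2) • F x) - (y - (c / L ^ 2) • F y)‖ ≤ √(1 - c ^ 2 / L ^ 2) * ‖x - y‖ := by
  have hconst : 1 - 2 * (c / L ^ 2) * c + (c / L ^ 2) ^ 2 * L ^ 2 = 1 - c ^ 2 / L ^ 2 := by
    rcases eq_or_ne L 0 with rfl | hL
    · simp
    · field_simp; ring
  have hsq := norm_sub_smul_sub_sq_le (div_nonneg hc (sq_nonneg L)) hLip hmono x y
  rw [hconst] at hsq
  calc ‖(x - (c / L ^ 2) • F x) - (y - (c / L ^ 2) • F y)‖
      = √(‖(x - (c / L ^ 2) • F x) - (y - (c / L ^ 2) • F y)‖ ^ 2) :=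
        (Real.sqrt_sq (norm_nonneg _)).symm
    _ ≤ √((1 - c ^ 2 / L ^ 2) * ‖x - y‖ ^ 2) := Real.sqrt_le_sqrt hsq
    _ = √(1 - c ^ 2 / L ^ 2) * ‖x - y‖ := by
        rw [Real.sqrt_mul' _ (sq_nonneg _), Real.sqrt_sq (norm_nonneg _)]

end StronglyMonotone

theorem ContractingWith.dist_perturbed_iterate_le {M : Type*} [MetricSpace M] {K : ℝ≥0}
    {f : M → M} (hf : ContractingWith K f) {u : M} (hu : Function.IsFixedPt f u)
    {x : ℕ → M} {η : ℝ} (hη : 0 ≤ η) (hx : ∀ n, dist (f (x n)) (x (n + 1)) ≤ η) (n : ℕ) :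
    dist (x n) u ≤ (K ^ n * dist (x 0) (f (x 0)) + η) / (1 - K) := by
  have hK := hf.one_sub_K_pos
  induction n with
  | zero =>
    grw [hf.dist_le_of_fixedPoint _ hu, pow_zero, one_mul]
    gcongr
    linarith
  | succ n ih =>
    have hstep : dist (x (n + 1)) u ≤ K * dist (x n) u + η := by
      calc dist (x (n + 1)) u ≤ dist (f (x n)) (x (n + 1)) + dist (f (x n)) (f u) := by
            rw [hu.eq]; exact dist_triangle_left _ _ _
        _ ≤ η + K * dist (x n) u := add_le_add (hx n) (hf.dist_le_mul _ _)
        _ = K * dist (x n) u + η := add_comm _ _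
    calc dist (x (n + 1)) u ≤ K * ((K ^ n * dist (x 0) (f (x 0)) + η) / (1 - K)) + η := by
          grw [hstep, ih]
      _ = (K ^ (n + 1) * dist (x 0) (f (x 0)) + η) / (1 - K) := by
          field_simp; ring

theorem stmt4_general
    {X : Type*} [NormedAddCommGroup X] [InnerProductSpace ℝ X]
    (F : X → X) (L c : ℝ) (hc : 0 < c)
    (hLip : ∀ x y : X, ‖F x - F y‖ ≤ L * ‖x - y‖)
    (hmono : ∀ x y : X, c * ‖x - y‖ ^ 2 ≤ ⟪F x - F y, x - y⟫)
    (B : X → X) (hBdef : ∀ x : X, B x = x - (c / L ^ 2) • F x)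
    (α : ℝ) (hαdef : α = Real.sqrt (1 - c ^ 2 / L ^ 2)) (hα1 : α < 1)
    (u : X) (hu : F u = 0)
    (ηh : ℝ) (hη : 0 ≤ ηh)
    (useq uh : ℕ → X) (h0 : uh 0 = useq 0)
    (hiter : ∀ n, useq (n + 1) = B (useq n))
    (hfine : ∀ n, ∀ v : X, |⟪B (uh n) - uh (n + 1), v⟫| ≤ ηh * ‖v‖) :
    ∀ n : ℕ,
      ‖u - uh n‖ ≤ (1 / (1 - α)) * (α ^ n * ‖useq 1 - useq 0‖ + ηh) := by
  intro n
  lift α to ℝ≥0 using (hαdef ▸ Real.sqrt_nonneg _ : 0 ≤ α) with K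
  have hB : ContractingWith K B :=
    ⟨mod_cast hα1, LipschitzWith.of_dist_le_mul fun x y => by
      rw [dist_eq_norm, dist_eq_norm, hBdef, hBdef, hαdef]
      exact norm_sub_smul_sub_le_sqrt_mul hc.le hLip hmono x y⟩
  have hfix : Function.IsFixedPt B u := by rw [Function.IsFixedPt, hBdef, hu, smul_zero, sub_zero]
  have hstep n : dist (B (uh n)) (uh (n + 1)) ≤ ηh := by
    rw [dist_eq_norm]; exact norm_le_of_forall_abs_inner_le hη (hfine n)
  have hest := hB.dist_perturbed_iterate_le hfix hη hstep n
  rw [h0, ← hiter, dist_eq_norm', dist_eq_norm'] at hest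
  simpa only [one_div_mul_eq_div, zero_add] using hest

/-- A priori error estimate: if `F` is `L`-Lipschitz and `c`-strongly monotone on a complete
real Hilbert space, `B x = x - (c/L²) • F x`, `α = √(1 - c²/L²) ∈ (0,1)`, `u` is the unique
zero of `F`, `(u^n)` is the exact iteration and `(u_h^n)` a perturbed iteration with fineness
`η_h`, then `‖u - u_h^n‖ ≤ (αⁿ ‖u¹ - u⁰‖ + η_h)/(1 - α)` for all `n`. -/
theorem stmt4
    {X : Type*} [NormedAddCommGroup X] [InnerProductSpace ℝ X] [CompleteSpace X]
    (F : X → X) (L c : ℝ) (hL : 0 < L) (hc : 0 < c)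
    (hLip : ∀ x y : X, ‖F x - F y‖ ≤ L * ‖x - y‖)
    (hmono : ∀ x y : X, c * ‖x - y‖ ^ 2 ≤ ⟪F x - F y, x - y⟫)
    (B : X → X) (hBdef : ∀ x : X, B x = x - (c / L ^ 2) • F x)
    (α : ℝ) (hαdef : α = Real.sqrt (1 - c ^ 2 / L ^ 2)) (hα0 : 0 < α) (hα1 : α < 1)
    (u : X) (hu : F u = 0)
    (ηh : ℝ) (hη : 0 ≤ ηh)
    (useq uh : ℕ → X) (h0 : uh 0 = useq 0)
    (hiter : ∀ n, useq (n + 1) = B (useq n))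
    (hfine : ∀ n, ∀ v : X, |⟪B (uh n) - uh (n + 1), v⟫| ≤ ηh * ‖v‖) :
    ∀ n : ℕ,
      ‖u - uh n‖ ≤ (1 / (1 - α)) * (α ^ n * ‖useq 1 - useq 0‖ + ηh) :=
  stmt4_general F L c hc hLip hmono B hBdef α hαdef hα1 u hu ηh hη useq uh h0 hiter hfine
end
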